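/- The group Out^0(W_3) is isomorphic to W_3, the free product of three copies of Z/2Z: it has presentation ⟨y_1, y_2, y_3 | y_1² = y_2² = y_3² = 1⟩ with no other relations. -/

import Mathlib

/-- Defining relations of `Wₙ`: each generator squares to the identity. -/
def wrels (n : ℕ) : Set (FreeGroup (Fin n)) :=
  {r | ∃ i : Fin n, r = FreeGroup.of i * FreeGroup.of i}

/-- The universal right-angled Coxeter group `Wₙ`. -/
abbrev W (n : ℕ) := PresentedGroup (wrels n)

/-- The generator `aᵢ` of `Wₙ`. -/
def gen {n : ℕ} (i : Fin n) : W n := PresentedGroup.of i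

/-- `φ` is the partial conjugation with acting letter `aᵢ` and domain `D`. -/
def IsPC {n : ℕ} (φ : W n ≃* W n) (i : Fin n) (D : Finset (Fin n)) : Prop :=
  (∀ j ∈ D, φ (gen j) = gen i * gen j * gen i) ∧ (∀ j ∉ D, φ (gen j) = gen j)

/-- The subgroup of inner automorphisms of `Wₙ`. -/
def InnSub (n : ℕ) : Subgroup (MulAut (W n)) :=
  (MulAut.conj : W n →* MulAut (W n)).range

instance innSubNormal (n : ℕ) : (InnSub n).Normal := by
  constructor
  rintro x ⟨g, rfl⟩ ψ
  refine ⟨ψ g, ?_⟩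
  ext h
  simp [MulAut.conj, mul_assoc]

/-- The outer automorphism group `Out(Wₙ)`. -/
abbrev OutW (n : ℕ) := MulAut (W n) ⧸ InnSub n

/-- `Out⁰(Wₙ)`: the subgroup of `Out(Wₙ)` generated by the classes of the partial
conjugations. -/
def Out0 (n : ℕ) : Subgroup (OutW n) :=
  Subgroup.closure {q | ∃ (φ : MulAut (W n)) (i : Fin n) (D : Finset (Fin n)),
    i ∉ D ∧ IsPC φ i D ∧ q = QuotientGroup.mk' (InnSub n) φ}

/-! `Phi` sends the generators of `W₃` to the partial conjugations `y_{0,{2}}, y_{1,{2}}`,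
`y_{2,{1}}`. Partial conjugations with the same acting letter compose by symmetric difference of
their domains, and `y_{i,{j}} y_{i,{k}}` is conjugation by `aᵢ` when `{i, j, k} = {0, 1, 2}`; so
modulo inner automorphisms every partial conjugation is a product of the three, and `Phi` maps
onto `Out⁰(W₃)`.

For injectivity: every `Phi w` preserves the even subgroup `F₂ = ⟨a₀a₁, a₀a₂⟩`, and its action
on `F₂ᵃᵇ = ℤ²` is a representation `mu : W₃ → GL₂(ℤ)` by reflections, faithful by ping-pong on
three arcs of the projective line. An inner automorphism acts on `ℤ²` as `±1`, so if `Phi w` is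
inner then `mu w = ±1`; a congruence mod 4 rules out `-1`, leaving `mu w = 1`, i.e. `w = 1`.
-/

section Generators

variable {n : ℕ} {G : Type*} [Group G]

@[simp]
theorem gen_mul_self (i : Fin n) : gen i * gen i = 1 :=
  PresentedGroup.one_of_mem ⟨i, rfl⟩

theorem gen_inv (i : Fin n) : (gen i)⁻¹ = gen i :=
  inv_eq_of_mul_eq_one_right (gen_mul_self i)

@[simp]
theorem gen_mul_gen_mul (i : Fin n) (x : W n) : gen i * (gen i * x) = x := by
  rw [← mul_assoc, gen_mul_self, one_mul]

def W.lift (g : Fin n → G) (hg : ∀ i, g i * g i = 1) : W n →* G :=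
  PresentedGroup.toGroup (f := g) (by rintro _ ⟨i, rfl⟩; simp [hg i])

@[simp]
theorem W.lift_gen (g : Fin n → G) (hg : ∀ i, g i * g i = 1) (i : Fin n) :
    W.lift g hg (gen i) = g i :=
  PresentedGroup.toGroup.of _

@[ext]
theorem W.hom_ext {f₁ f₂ : W n →* G} (h : ∀ i, f₁ (gen i) = f₂ (gen i)) : f₁ = f₂ :=
  PresentedGroup.ext h

@[elab_as_elim]
theorem W.induction_on {P : W n → Prop} (x : W n) (one : P 1)
    (gen_mul : ∀ i x, P x → P (gen i * x)) : P x := by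
  have hx : x ∈ Subgroup.closure (Set.range gen) := by
    simp [show (gen : Fin n → W n) = PresentedGroup.of from rfl]
  induction hx using Subgroup.closure_induction_left with
  | one => exact one
  | mul_left _ hg y _ ih => obtain ⟨i, rfl⟩ := hg; exact gen_mul i y ih
  | inv_mul_cancel _ hg y _ ih => obtain ⟨i, rfl⟩ := hg; rw [gen_inv]; exact gen_mul i y ih

end Generators

section PingPong

open Monoid Pointwise Function

variable {n : ℕ}

theorem W.eq_one_or_eq_gen (x : W 1) : x = 1 ∨ x = gen 0 := by
  induction x using W.induction_on with
  | one => exact .inl rfl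
  | gen_mul i x ih =>
    obtain rfl := Subsingleton.elim i 0
    rcases ih with rfl | rfl
    · exact .inr (mul_one _)
    · exact .inl (gen_mul_self 0)

def W.toCoprodI : W n →* CoprodI (fun _ : Fin n => W 1) :=
  W.lift (fun i => CoprodI.of (i := i) (gen 0))
    (fun i => by rw [← map_mul, gen_mul_self, map_one])

def W.factor (i : Fin n) : W 1 →* W n :=
  W.lift (fun _ => gen i) (fun _ => gen_mul_self i)

theorem W.lift_factor_comp_toCoprodI {G : Type*} [Group G] (ρ : W n →* G) :
    (CoprodI.lift fun i => ρ.comp (W.factor i)).comp W.toCoprodI = ρ := by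
  ext i
  simp [W.toCoprodI, W.factor]

theorem W.injective_toCoprodI : Injective (W.toCoprodI (n := n)) :=
  LeftInverse.injective (g := CoprodI.lift W.factor) fun x =>
    DFunLike.congr_fun (W.lift_factor_comp_toCoprodI (MonoidHom.id _)) x

theorem W.injective_of_pingPong (hn : 3 ≤ n) {G α : Type*} [Group G] [MulAction G α]
    (ρ : W n →* G) (X : Fin n → Set α) (hX : ∀ i, (X i).Nonempty)
    (hdisj : Pairwise (Disjoint on X)) (hpp : ∀ i j, i ≠ j → ρ (gen i) • X j ⊆ X i) :
    Injective ρ := by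
  have : Nontrivial (Fin n) := Fin.nontrivial_iff_two_le.mpr (by omega)
  rw [← W.lift_factor_comp_toCoprodI ρ, MonoidHom.coe_comp]
  refine (CoprodI.lift_injective_of_ping_pong (G := G) _ (.inl ?_) X hX hdisj ?_).comp
    W.injective_toCoprodI
  · simpa using hn
  intro i j hij h hh
  obtain rfl := (W.eq_one_or_eq_gen h).resolve_left hh
  simpa [W.factor] using hpp i j hij

end PingPong

section PartialConjugation

open scoped symmDiff

variable {n : ℕ}

theorem pconj_image_mul_self (i : Fin n) (D : Finset (Fin n)) (k : Fin n) :
    (if k ∈ D then gen i * gen k * gen i else gen k) *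
      (if k ∈ D then gen i * gen k * gen i else gen k) = 1 := by
  split_ifs
  · simp [mul_assoc]
  · exact gen_mul_self k

def pconjHom (i : Fin n) (D : Finset (Fin n)) : W n →* W n :=
  W.lift (fun k => if k ∈ D then gen i * gen k * gen i else gen k) (pconj_image_mul_self i D)

theorem pconjHom_gen (i : Fin n) (D : Finset (Fin n)) (k : Fin n) :
    pconjHom i D (gen k) = if k ∈ D then gen i * gen k * gen i else gen k :=
  W.lift_gen ..

theorem pconjHom_comp (i : Fin n) (D E : Finset (Fin n)) :
    (pconjHom i D).comp (pconjHom i E) = pconjHom i (D ∆ E) := by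
  ext k
  by_cases hD : k ∈ D <;> by_cases hE : k ∈ E <;>
    simp [hD, hE, pconjHom_gen, Finset.mem_symmDiff, mul_assoc]

theorem pconjHom_empty (i : Fin n) : pconjHom i ∅ = MonoidHom.id (W n) := by
  ext k
  simp [pconjHom_gen]

theorem pconjHom_comp_self (i : Fin n) (D : Finset (Fin n)) :
    (pconjHom i D).comp (pconjHom i D) = MonoidHom.id (W n) := by
  rw [pconjHom_comp, symmDiff_self, Finset.bot_eq_empty, pconjHom_empty]

/-- The partial conjugation with acting letter `gen i` and domain `D`; whether `i ∈ D` does not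
matter, since `gen i` is fixed either way. -/
def pconj (i : Fin n) (D : Finset (Fin n)) : MulAut (W n) :=
  (pconjHom i D).toMulEquiv (pconjHom i D) (pconjHom_comp_self i D) (pconjHom_comp_self i D)

theorem pconj_gen (i : Fin n) (D : Finset (Fin n)) (k : Fin n) :
    pconj i D (gen k) = if k ∈ D then gen i * gen k * gen i else gen k :=
  pconjHom_gen i D k

theorem pconj_mul (i : Fin n) (D E : Finset (Fin n)) :
    pconj i D * pconj i E = pconj i (D ∆ E) :=
  MulEquiv.ext fun x => DFunLike.congr_fun (pconjHom_comp i D E) x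

theorem pconj_empty (i : Fin n) : pconj i ∅ = 1 :=
  MulEquiv.ext fun x => DFunLike.congr_fun (pconjHom_empty i) x

theorem pconj_mul_self (i : Fin n) (D : Finset (Fin n)) : pconj i D * pconj i D = 1 := by
  rw [pconj_mul, symmDiff_self, Finset.bot_eq_empty, pconj_empty]

theorem isPC_pconj (i : Fin n) (D : Finset (Fin n)) : IsPC (pconj i D) i D :=
  ⟨fun k hk => by simp [pconj_gen, hk], fun k hk => by simp [pconj_gen, hk]⟩

theorem W.mulAut_ext {φ ψ : MulAut (W n)} (h : ∀ i, φ (gen i) = ψ (gen i)) : φ = ψ :=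
  MulEquiv.toMonoidHom_injective (W.hom_ext h)

theorem IsPC.eq_pconj {φ : MulAut (W n)} {i : Fin n} {D : Finset (Fin n)} (h : IsPC φ i D) :
    φ = pconj i D := by
  refine W.mulAut_ext fun k => ?_
  by_cases hk : k ∈ D
  · rw [h.1 k hk, pconj_gen, if_pos hk]
  · rw [h.2 k hk, pconj_gen, if_neg hk]

theorem pconj_univ (i : Fin n) : pconj i Finset.univ = MulAut.conj (gen i) :=
  W.mulAut_ext fun k => by simp [pconj_gen, gen_inv]

theorem pconj_singleton_self (i : Fin n) : pconj i {i} = 1 :=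
  W.mulAut_ext fun k => by by_cases hk : k = i <;> simp [pconj_gen, hk]

theorem pconj_mem_of_forall_singleton_mem {H : Subgroup (MulAut (W n))} {i : Fin n}
    (h : ∀ j, pconj i {j} ∈ H) (D : Finset (Fin n)) : pconj i D ∈ H := by
  induction D using Finset.induction_on with
  | empty => rw [pconj_empty]; exact H.one_mem
  | insert j D hj ih =>
    rw [Finset.insert_eq, ← Finset.sup_eq_union,
      ← (Finset.disjoint_singleton_left.2 hj).symmDiff_eq_sup, ← pconj_mul]
    exact H.mul_mem (h j) ih

end PartialConjugation

section Phi

open scoped symmDiff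

/-- The `pconj i {partner i}` are the generators `y_{1,{3}}, y_{2,{3}}, y_{3,{2}}` of `Out⁰(W₃)`,
with letters indexed from `0`. -/
def partner : Fin 3 → Fin 3 := ![2, 2, 1]

def Phi : W 3 →* MulAut (W 3) :=
  W.lift (fun i => pconj i {partner i}) (fun i => pconj_mul_self i _)

theorem Phi_gen (i : Fin 3) : Phi (gen i) = pconj i {partner i} :=
  W.lift_gen ..

def outHom : W 3 →* OutW 3 := (QuotientGroup.mk' (InnSub 3)).comp Phi

theorem mk_pconj_mul_mk_pconj {i j k : Fin 3} (hij : i ≠ j) (hjk : j ≠ k) (hik : i ≠ k) :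
    QuotientGroup.mk' (InnSub 3) (pconj i {j}) * QuotientGroup.mk' (InnSub 3) (pconj i {k}) =
      1 := by
  have hD : ({j} ∆ {k}) ∆ {i} = (Finset.univ : Finset (Fin 3)) := by
    revert i j k; decide
  rw [← map_mul, ← mul_one (pconj i {j} * _), ← pconj_singleton_self i, pconj_mul, pconj_mul,
    hD, pconj_univ, ← MonoidHom.mem_ker, QuotientGroup.ker_mk']
  exact ⟨gen i, rfl⟩

theorem mk_pconj_mem_range_outHom (i j : Fin 3) :
    QuotientGroup.mk' (InnSub 3) (pconj i {j}) ∈ outHom.range := by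
  have hgen : QuotientGroup.mk' (InnSub 3) (pconj i {partner i}) ∈ outHom.range :=
    ⟨gen i, by rw [outHom, MonoidHom.comp_apply, Phi_gen]⟩
  by_cases hji : j = i
  · rw [hji, pconj_singleton_self, map_one]
    exact one_mem _
  by_cases hjp : j = partner i
  · rwa [hjp]
  have hpi : partner i ≠ i := by fin_cases i <;> decide
  rw [eq_inv_of_mul_eq_one_left (mk_pconj_mul_mk_pconj (Ne.symm hji) hjp (Ne.symm hpi))]
  exact inv_mem hgen

theorem range_outHom : outHom.range = Out0 3 := by
  apply le_antisymm
  · rintro _ ⟨w, rfl⟩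
    induction w using W.induction_on with
    | one => rw [map_one]; exact one_mem _
    | gen_mul i w ih =>
      rw [map_mul]
      refine mul_mem (Subgroup.subset_closure ⟨_, i, {partner i}, ?_, isPC_pconj _ _, ?_⟩) ih
      · fin_cases i <;> decide
      · rw [outHom, MonoidHom.comp_apply, Phi_gen]
  · refine (Subgroup.closure_le _).2 ?_
    rintro _ ⟨φ, i, D, -, hφ, rfl⟩
    rw [hφ.eq_pconj]
    exact pconj_mem_of_forall_singleton_mem (H := outHom.range.comap (QuotientGroup.mk' _))
      (mk_pconj_mem_range_outHom i) D

end Phi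

/-- The affine maps `x ↦ v + s • x` of `ℤ²` with `s = ±1`, i.e. `ℤ² ⋊ ℤˣ`. -/
@[ext]
structure SignedAffine where
  v : Fin 2 → ℤ
  s : ℤˣ

namespace SignedAffine

open Matrix

instance : Mul SignedAffine := ⟨fun a b => ⟨a.v + (a.s : ℤ) • b.v, a.s * b.s⟩⟩
instance : One SignedAffine := ⟨⟨0, 1⟩⟩
instance : Inv SignedAffine := ⟨fun a => ⟨-((a.s : ℤ) • a.v), a.s⟩⟩

theorem mul_def (a b : SignedAffine) : a * b = ⟨a.v + (a.s : ℤ) • b.v, a.s * b.s⟩ := rfl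
theorem one_def : (1 : SignedAffine) = ⟨0, 1⟩ := rfl
theorem inv_def (a : SignedAffine) : a⁻¹ = ⟨-((a.s : ℤ) • a.v), a.s⟩ := rfl

instance : Group SignedAffine :=
  Group.ofLeftAxioms
    (fun a b c => by ext <;> simp [mul_def, mul_smul, smul_add, add_assoc, mul_assoc])
    (fun a => by ext <;> simp [mul_def, one_def])
    (fun a => by ext <;> simp [mul_def, one_def, inv_def, Int.units_mul_self])

theorem mul_self_of_s_eq_neg_one (a : SignedAffine) (ha : a.s = -1) : a * a = 1 := by
  ext <;> simp [mul_def, one_def, ha]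

theorem conj_v_of_s_eq_one (a b : SignedAffine) (hb : b.s = 1) :
    (a * b * a⁻¹).v = (a.s : ℤ) • b.v := by
  simp only [mul_def, inv_def, hb, mul_one, smul_neg, smul_smul, Int.units_coe_mul_self, one_smul]
  abel

/-- Conjugation by the linear map `M`. -/
def twist (M : Matrix (Fin 2) (Fin 2) ℤ) : SignedAffine →* SignedAffine where
  toFun a := ⟨M *ᵥ a.v, a.s⟩
  map_one' := by ext <;> simp [one_def]
  map_mul' a b := by ext <;> simp only [mul_def, mulVec_add, mulVec_smul]

theorem twist_apply (M : Matrix (Fin 2) (Fin 2) ℤ) (a : SignedAffine) :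
    twist M a = ⟨M *ᵥ a.v, a.s⟩ := rfl

theorem twist_mul (M N : Matrix (Fin 2) (Fin 2) ℤ) (a : SignedAffine) :
    twist (M * N) a = twist M (twist N a) := by
  simp only [twist_apply, mulVec_mulVec]

theorem twist_one (a : SignedAffine) : twist 1 a = a := by
  simp only [twist_apply, one_mulVec]

end SignedAffine

section Injectivity

open Matrix SignedAffine

def reflMatrix : Fin 3 → Matrix (Fin 2) (Fin 2) ℤ :=
  ![!![1, 0; 0, -1], !![1, 2; 0, -1], !![-1, 0; 2, 1]]

theorem reflMatrix_mul_self (i : Fin 3) : reflMatrix i * reflMatrix i = 1 := by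
  fin_cases i <;> simp [reflMatrix, one_fin_two]

def mu : W 3 →* GL (Fin 2) ℤ :=
  W.lift (fun i => ⟨reflMatrix i, reflMatrix i, reflMatrix_mul_self i, reflMatrix_mul_self i⟩)
    (fun i => Units.ext (reflMatrix_mul_self i))

theorem mu_gen (i : Fin 3) : (mu (gen i) : Matrix (Fin 2) (Fin 2) ℤ) = reflMatrix i := by
  simp [mu]

/-- On the index-two subgroup of even words, free on `gen 0 * gen 1` and `gen 0 * gen 2`,
`cocycle` is the abelianisation onto `ℤ²`; each `Phi w` preserves this subgroup, and `reflMatrix`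
records the induced action of `Phi (gen i)` on `ℤ²`. -/
def cocycle : W 3 →* SignedAffine :=
  W.lift ![⟨0, -1⟩, ⟨-![1, 0], -1⟩, ⟨-![0, 1], -1⟩] (fun i => by
    fin_cases i <;> exact mul_self_of_s_eq_neg_one _ rfl)

theorem cocycle_comp_Phi_gen (i : Fin 3) :
    cocycle.comp (Phi (gen i) : W 3 →* W 3) = (twist (reflMatrix i)).comp cocycle := by
  ext k : 1
  simp only [MonoidHom.comp_apply, Phi_gen]
  fin_cases i <;> fin_cases k <;>
    simp [partner, pconj_gen, cocycle, reflMatrix, twist_apply, mul_def] <;> decide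

theorem cocycle_Phi (w x : W 3) :
    cocycle (Phi w x) = twist (mu w : Matrix (Fin 2) (Fin 2) ℤ) (cocycle x) := by
  induction w using W.induction_on generalizing x with
  | one => simp [twist_one]
  | gen_mul i w ih =>
    rw [map_mul, MulAut.mul_apply, map_mul, Units.val_mul, twist_mul, ← ih, mu_gen]
    exact DFunLike.congr_fun (cocycle_comp_Phi_gen i) _

theorem cocycle_gen_zero_mul_gen_succ (k : Fin 2) :
    cocycle (gen 0 * gen k.succ) = ⟨Pi.single k 1, 1⟩ := by
  rw [map_mul]
  fin_cases k <;> ext : 1 <;> simp [cocycle, mul_def] <;> decide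

/-- `(cocycle g).s` is the parity of `g`, and conjugation by `g` scales the translation part of
every even element by it. -/
theorem mu_eq_smul_one_of_Phi_eq_conj {w g : W 3} (h : Phi w = MulAut.conj g) :
    (mu w : Matrix (Fin 2) (Fin 2) ℤ) = ((cocycle g).s : ℤ) • 1 := by
  have key : ∀ x, (cocycle x).s = 1 →
      (mu w : Matrix (Fin 2) (Fin 2) ℤ) *ᵥ (cocycle x).v =
        ((cocycle g).s : ℤ) • (cocycle x).v := by
    intro x hx
    have := congrArg SignedAffine.v (cocycle_Phi w x)
    rw [h, MulAut.conj_apply, map_mul, map_mul, map_inv, conj_v_of_s_eq_one _ _ hx,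
      twist_apply] at this
    exact this.symm
  refine ext_of_mulVec_single fun k => ?_
  have hk := key (gen 0 * gen k.succ) (by rw [cocycle_gen_zero_mul_gen_succ])
  rw [smul_mulVec, one_mulVec]
  rwa [cocycle_gen_zero_mul_gen_succ] at hk


/-- The matrices `!![a, b; c, d]` of `Γ(2)` with `a ≡ 1 + c (mod 4)`: on `Γ(2)`, `a mod 4` is
multiplicative and `c mod 4` additive, so this is a submonoid. It contains every `reflMatrix i`
but not `-1`. -/
def congrSubmonoid : Submonoid (Matrix (Fin 2) (Fin 2) ℤ) where
  carrier := {M | ∃ p q r t : ℤ,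
    M 0 1 = 2 * p ∧ M 1 0 = 2 * q ∧ M 1 1 = 2 * r + 1 ∧ M 0 0 = 4 * t + 2 * q + 1}
  one_mem' := ⟨0, 0, 0, 0, by simp⟩
  mul_mem' := by
    rintro M N ⟨p, q, r, t, hp, hq, hr, ht⟩ ⟨p', q', r', t', hp', hq', hr', ht'⟩
    simp only [Set.mem_ofPred_eq, mul_apply, Fin.sum_univ_two, hp, hq, hr, ht, hp', hq', hr', ht']
    exact ⟨(4 * t + 2 * q + 1) * p' + p * (2 * r' + 1),
      q * (4 * t' + 2 * q' + 1) + (2 * r + 1) * q', 2 * q * p' + 2 * r * r' + r + r',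
      4 * t * t' + 2 * t * q' + t + t' - r * q' + p * q',
      by ring, by ring, by ring, by ring⟩

theorem neg_one_notMem_congrSubmonoid : -1 ∉ congrSubmonoid := by
  rintro ⟨p, q, r, t, -, hq, -, ht⟩
  rw [neg_apply, one_apply_ne (by decide)] at hq
  rw [neg_apply, one_apply_eq] at ht
  omega

theorem mu_mem_congrSubmonoid (w : W 3) : (mu w : Matrix (Fin 2) (Fin 2) ℤ) ∈ congrSubmonoid := by
  induction w using W.induction_on with
  | one => exact congrSubmonoid.one_mem
  | gen_mul i w ih =>
    rw [map_mul, Units.val_mul, mu_gen]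
    refine congrSubmonoid.mul_mem ?_ ih
    fin_cases i
    · exact ⟨0, 0, -1, 0, by simp [reflMatrix]⟩
    · exact ⟨1, 0, -1, 0, by simp [reflMatrix]⟩
    · exact ⟨0, 1, 0, -1, by simp [reflMatrix]⟩

/-- The three arcs of the projective line cut out by the fixed lines of the reflections. -/
def pingPongSet : Fin 3 → Set (Fin 2 → ℤ) :=
  ![{v | 0 < v 0 * v 1}, {v | v 1 * (v 0 + v 1) < 0}, {v | v 0 * v 1 < 0 ∧ 0 < v 1 * (v 0 + v 1)}]

theorem reflMatrix_mulVec_mem_pingPongSet {i j : Fin 3} (hij : i ≠ j) {v : Fin 2 → ℤ}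
    (hv : v ∈ pingPongSet j) : reflMatrix i *ᵥ v ∈ pingPongSet i := by
  fin_cases i <;> fin_cases j <;>
    simp [pingPongSet, reflMatrix, vecHead, vecTail] at hij hv ⊢ <;> (try apply And.intro) <;>
    nlinarith [sq_nonneg (v 0), sq_nonneg (v 1), sq_nonneg (v 0 + v 1)]

theorem injective_mu : Function.Injective mu := by
  refine Function.Injective.of_comp (f := GeneralLinearGroup.toLin) <|
    W.injective_of_pingPong le_rfl (GeneralLinearGroup.toLin.toMonoidHom.comp mu) pingPongSet
      ?_ ?_ ?_
  · intro i
    fin_cases i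
    · exact ⟨![1, 1], by simp [pingPongSet]⟩
    · exact ⟨![-2, 1], by simp [pingPongSet]⟩
    · exact ⟨![-1, 2], by simp [pingPongSet]⟩
  · intro i j hij
    rw [Function.onFun, Set.disjoint_left]
    intro v hi hj
    fin_cases i <;> fin_cases j <;> simp [pingPongSet] at hij hi hj <;>
      nlinarith [sq_nonneg (v 1)]
  · rintro i j hij _ ⟨v, hv, rfl⟩
    have : (GeneralLinearGroup.toLin (mu (gen i))) • v = reflMatrix i *ᵥ v := by
      simp [Units.smul_def, mu_gen]
    simpa [this] using reflMatrix_mulVec_mem_pingPongSet hij hv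

end Injectivity

theorem eq_one_of_Phi_eq_conj {w g : W 3} (h : Phi w = MulAut.conj g) : w = 1 := by
  have hmu := mu_eq_smul_one_of_Phi_eq_conj h
  rcases Int.units_eq_one_or (cocycle g).s with hs | hs
  · exact injective_mu (Units.ext (by simpa [hs] using hmu))
  · have := mu_mem_congrSubmonoid w
    rw [hmu, hs, Units.val_neg, Units.val_one, neg_smul, one_smul] at this
    exact absurd this neg_one_notMem_congrSubmonoid

theorem injective_outHom : Function.Injective outHom := by
  refine (injective_iff_map_eq_one _).2 fun w hw => ?_
  obtain ⟨g, hg⟩ : Phi w ∈ InnSub 3 := by rwa [← QuotientGroup.ker_mk' (InnSub 3)]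
  exact eq_one_of_Phi_eq_conj hg.symm

/-- `Out⁰(W₃)` is isomorphic to `W₃`, the free product of three copies of `ℤ/2`
(equivalently, it has presentation `⟨y₁, y₂, y₃ ∣ y₁² = y₂² = y₃² = 1⟩` with no
other relations, which is exactly the presentation defining `W 3`). -/
theorem stmt17 : Nonempty (↥(Out0 3) ≃* W 3) :=
  ⟨((MonoidHom.ofInjective injective_outHom).trans (MulEquiv.subgroupCongr range_outHom)).symm⟩
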